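/- arXiv:2402.04385 — 2 statements merged into one kernel-verified Lean document; each statement's English description precedes it below -/
import Mathlib

section
/- Let r₁ ≠ r₂ be nonzero roots of x² + c₁x + c₂ = 0 with p₁ = (r₁+r₂)/2 ≠ 0. Then |0 - p₁| / |r₁ - p₁| = |p₁ - r₁| / |c₂/p₁ - p₁| = |0 - r₁| / |r₁ - c₂/p₁| = |r₁ + r₂| / |r₁ - r₂|; hence the triangles with vertices (0, p₁, r₁) and (r₁, p₁, c₂/p₁) are similar. -/
/-!
With `s = r₁ + r₂` and `d = r₁ - r₂`, the complex ratios of corresponding sides of the two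
triangles are `-(s / d)`, `s / d` and `-(s / d)`: this is an algebraic identity in `r₁, r₂`
once `p₁ = s / 2` and `c₂ / p₁ = 2 r₁ r₂ / s` are substituted, and taking moduli gives the
equal side ratios.
-/

section Field

variable {K : Type*} [Field K]

theorem sub_midpoint (h2 : (2 : K) ≠ 0) (a b : K) : a - (a + b) / 2 = (a - b) / 2 := by
  field_simp; ring

theorem mul_div_midpoint_sub_midpoint (a b : K) :
    a * b / ((a + b) / 2) - (a + b) / 2 = -((a - b) ^ 2 / (2 * (a + b))) := by
  rcases eq_or_ne (a + b) 0 with hab | hab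
  · simp [hab]
  field_simp; ring

theorem sub_mul_div_midpoint {a b : K} (hab : a + b ≠ 0) :
    a - a * b / ((a + b) / 2) = a * (a - b) / (a + b) := by
  field_simp; ring

theorem zero_sub_midpoint_div_sub_midpoint (h2 : (2 : K) ≠ 0) (a b : K) :
    (0 - (a + b) / 2) / (a - (a + b) / 2) = -((a + b) / (a - b)) := by
  rw [sub_midpoint h2, zero_sub, neg_div, div_div_div_cancel_right₀ h2]

theorem midpoint_sub_div_mul_div_midpoint_sub (h2 : (2 : K) ≠ 0) (a b : K) :
    ((a + b) / 2 - a) / (a * b / ((a + b) / 2) - (a + b) / 2) = (a + b) / (a - b) := by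
  rw [← neg_sub, sub_midpoint h2, mul_div_midpoint_sub_midpoint, neg_div_neg_eq]
  rcases eq_or_ne (a - b) 0 with hd | hd
  · simp [hd]
  rcases eq_or_ne (a + b) 0 with hab | hab
  · simp [hab]
  field_simp

theorem zero_sub_div_sub_mul_div_midpoint {a b : K} (ha : a ≠ 0)
    (hab : a + b ≠ 0) :
    (0 - a) / (a - a * b / ((a + b) / 2)) = -((a + b) / (a - b)) := by
  rw [sub_mul_div_midpoint hab, zero_sub, neg_div, div_div_eq_mul_div, mul_div_mul_left _ _ ha]

end Field

theorem stmt_11_general (r₁ r₂ c₂ p₁ : ℂ) (hr₁ : r₁ ≠ 0)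
    (hc₂ : c₂ = r₁ * r₂) (hp₁ : p₁ = (r₁ + r₂) / 2) (hp₁0 : p₁ ≠ 0) :
    ‖0 - p₁‖ / ‖r₁ - p₁‖ = ‖r₁ + r₂‖ / ‖r₁ - r₂‖ ∧
    ‖p₁ - r₁‖ / ‖c₂ / p₁ - p₁‖ = ‖r₁ + r₂‖ / ‖r₁ - r₂‖ ∧
    ‖0 - r₁‖ / ‖r₁ - c₂ / p₁‖ = ‖r₁ + r₂‖ / ‖r₁ - r₂‖ := by
  subst hc₂ hp₁
  have hsum : r₁ + r₂ ≠ 0 := by simpa using hp₁0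
  simp only [← norm_div, zero_sub_midpoint_div_sub_midpoint two_ne_zero,
    midpoint_sub_div_mul_div_midpoint_sub two_ne_zero,
    zero_sub_div_sub_mul_div_midpoint hr₁ hsum, norm_neg, and_self]

theorem stmt_11 (r₁ r₂ c₂ p₁ : ℂ) (hr₁ : r₁ ≠ 0) (hr₂ : r₂ ≠ 0) (hne : r₁ ≠ r₂)
    (hc₂ : c₂ = r₁ * r₂) (hp₁ : p₁ = (r₁ + r₂) / 2) (hp₁0 : p₁ ≠ 0) :
    ‖0 - p₁‖ / ‖r₁ - p₁‖ = ‖r₁ + r₂‖ / ‖r₁ - r₂‖ ∧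
    ‖p₁ - r₁‖ / ‖c₂ / p₁ - p₁‖ = ‖r₁ + r₂‖ / ‖r₁ - r₂‖ ∧
    ‖0 - r₁‖ / ‖r₁ - c₂ / p₁‖ = ‖r₁ + r₂‖ / ‖r₁ - r₂‖ :=
  stmt_11_general r₁ r₂ c₂ p₁ hr₁ hc₂ hp₁ hp₁0
end

section
/- With p₁ = (r₁+r₂)/2 ≠ 0 and c₂ = r₁r₂, the unoriented angle at p₁ between the points 0 and r₁ equals the unoriented angle at p₁ between r₁ and c₂/p₁, provided r₁, r₂ are nonzero and distinct and r₁ ≠ p₁. -/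
open Complex

/-! With `d = r₁ - p₁` one has `r₁ = p₁ + d` and `r₂ = p₁ - d`, so `c₂ = p₁² - d²` and
`c₂ / p₁ - p₁ = (d / p₁) * (-d)`, while `d = (d / p₁) * p₁`. Multiplication by the nonzero
complex number `d / p₁` preserves angles, so the right-hand angle is the angle between `p₁` and
`-d`, which is the left-hand one after negating both vectors. -/

open InnerProductGeometry

theorem stmt_13_general (r₁ r₂ c₂ p₁ : ℂ) (hne : r₁ ≠ r₂)
    (hc₂ : c₂ = r₁ * r₂) (hp₁ : p₁ = (r₁ + r₂) / 2) (hp₁0 : p₁ ≠ 0) :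
    InnerProductGeometry.angle ((0 : ℂ) - p₁) (r₁ - p₁) =
      InnerProductGeometry.angle (r₁ - p₁) (c₂ / p₁ - p₁) := by
  set d := r₁ - p₁ with hd
  have hd0 : d ≠ 0 := by
    rw [hd, hp₁, sub_ne_zero]
    contrapose! hne
    linear_combination 2 * hne
  have hc₂p₁ : c₂ / p₁ - p₁ = d / p₁ * -d := by
    field_simp
    rw [hd, hc₂, hp₁]
    ring
  calc angle (0 - p₁) d
      = angle p₁ (-d) := by rw [zero_sub, ← angle_neg_neg, neg_neg]
    _ = angle (d / p₁ * p₁) (d / p₁ * -d) := (angle_mul_left (div_ne_zero hd0 hp₁0) _ _).symm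
    _ = angle d (c₂ / p₁ - p₁) := by rw [div_mul_cancel₀ d hp₁0, hc₂p₁]

theorem stmt_13 (r₁ r₂ c₂ p₁ : ℂ) (hr₁ : r₁ ≠ 0) (hr₂ : r₂ ≠ 0) (hne : r₁ ≠ r₂)
    (hc₂ : c₂ = r₁ * r₂) (hp₁ : p₁ = (r₁ + r₂) / 2) (hp₁0 : p₁ ≠ 0) :
    InnerProductGeometry.angle ((0 : ℂ) - p₁) (r₁ - p₁) =
      InnerProductGeometry.angle (r₁ - p₁) (c₂ / p₁ - p₁) :=
  stmt_13_general r₁ r₂ c₂ p₁ hne hc₂ hp₁ hp₁0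
end
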